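/- Let N ≥ 2 and 1 ≤ K < N be integers and let p be the uniform distribution on B_K. Then the information matrix M(p) is invertible and trace(M(p)⁻¹) = N/K + N·(N−1)²/(N−K). -/

import Mathlib

/-- `BK N K` is the set of binary vectors in `ℝ^N` with exactly `K` entries
equal to `1`. -/
noncomputable def BK (N K : ℕ) : Finset (Fin N → ℝ) :=
  (Finset.univ.powersetCard K : Finset (Finset (Fin N))).image
    (fun s => fun i => if i ∈ s then (1 : ℝ) else 0)

/-- The information matrix `M(p) = ∑_{x ∈ X} (p(x)/(xᵀx)) · x·xᵀ`. -/
noncomputable def infoMatrix {N : ℕ} (X : Finset (Fin N → ℝ)) (p : (Fin N → ℝ) → ℝ) :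
    Matrix (Fin N) (Fin N) ℝ :=
  ∑ x ∈ X, (p x / ∑ i, x i ^ 2) • Matrix.vecMulVec x x

/-!
Entry `(i, j)` of `M(p)` is `1 / (K * C(N, K))` times the number of `K`-subsets containing
`{i, j}`, so `M(p) = a • 1 + b • J` with `J` the all-ones matrix, `a = (N - K) / (N (N - 1))`
and `b = (K - 1) / (N (N - 1))`. Since `J * J = N • J`, such matrices are inverted within the
same family: `(a • 1 + b • J)⁻¹ = a⁻¹ • 1 - (b / (a (a + N b))) • J`, and the trace follows.
-/

open Finset Matrix

section AllOnes

variable {ι R : Type*} [Fintype ι]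

theorem of_one_mul_of_one [Semiring R] :
    (of 1 : Matrix ι ι R) * of 1 = (Fintype.card ι : R) • of 1 := by
  ext i j
  simp [mul_apply]

theorem trace_of_one [Semiring R] : (of 1 : Matrix ι ι R).trace = Fintype.card ι := by
  simp [trace]

variable [DecidableEq ι]

theorem smul_one_add_smul_of_one_mul [CommRing R] (a b c d : R) :
    (a • 1 + b • of 1 : Matrix ι ι R) * (c • 1 + d • of 1)
      = (a * c) • 1 + (a * d + b * c + Fintype.card ι * b * d) • of 1 := by
  simp only [add_mul, mul_add, smul_mul_smul_comm, Matrix.one_mul, Matrix.mul_one,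
    of_one_mul_of_one, smul_smul]
  module

variable {𝕜 : Type*} [Field 𝕜] {a b : 𝕜}

theorem smul_one_add_smul_of_one_mul_eq_one (ha : a ≠ 0) (hab : a + Fintype.card ι * b ≠ 0) :
    (a • 1 + b • of 1 : Matrix ι ι 𝕜) * (a⁻¹ • 1 + (-b / (a * (a + Fintype.card ι * b))) • of 1)
      = 1 := by
  have hcoeff : a * (-b / (a * (a + Fintype.card ι * b))) + b * a⁻¹
      + Fintype.card ι * b * (-b / (a * (a + Fintype.card ι * b))) = 0 := by
    have hd : (a + Fintype.card ι * b) * (-b / (a * (a + Fintype.card ι * b))) = -(b * a⁻¹) := by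
      field_simp
    linear_combination hd
  rw [smul_one_add_smul_of_one_mul, mul_inv_cancel₀ ha, hcoeff, one_smul, zero_smul, add_zero]

theorem isUnit_smul_one_add_smul_of_one (ha : a ≠ 0) (hab : a + Fintype.card ι * b ≠ 0) :
    IsUnit (a • 1 + b • of 1 : Matrix ι ι 𝕜) :=
  (isUnit_iff_isUnit_det _).mpr (isUnit_det_of_right_inverse
    (smul_one_add_smul_of_one_mul_eq_one ha hab))

theorem trace_inv_smul_one_add_smul_of_one (ha : a ≠ 0) (hab : a + Fintype.card ι * b ≠ 0) :
    ((a • 1 + b • of 1 : Matrix ι ι 𝕜)⁻¹).trace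
      = Fintype.card ι * (a + (Fintype.card ι - 1) * b) / (a * (a + Fintype.card ι * b)) := by
  rw [inv_eq_right_inv (smul_one_add_smul_of_one_mul_eq_one ha hab), trace_add, trace_smul,
    trace_smul, trace_one, trace_of_one, smul_eq_mul, smul_eq_mul]
  field_simp
  ring

end AllOnes

-- Stated multiplicatively so that it also holds, as `0 = 0`, when `n < #s`.
theorem card_filter_powersetCard_subset_mul_choose {α : Type*} [DecidableEq α]
    (s t : Finset α) (n : ℕ) (hst : s ⊆ t) :
    #{u ∈ t.powersetCard n | s ⊆ u} * (#t).choose #s = (#t).choose n * n.choose #s := by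
  by_cases hsn : #s ≤ n
  · rw [card_filter_powersetCard_subset s t n hst hsn, Nat.choose_mul hsn, mul_comm]
  · push Not at hsn
    have hempty : {u ∈ t.powersetCard n | s ⊆ u} = ∅ :=
      filter_eq_empty_iff.mpr fun u hu hsu =>
        (card_le_card hsu).not_gt ((mem_powersetCard.mp hu).2 ▸ hsn)
    rw [hempty, Nat.choose_eq_zero_of_lt hsn, card_empty, zero_mul, mul_zero]

theorem infoMatrix_BK_apply (N K : ℕ) (q : ℝ) (i j : Fin N) :
    infoMatrix (BK N K) (fun _ => q) i j
      = q / K * #{s ∈ univ.powersetCard K | {i, j} ⊆ s} := by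
  have hinj : Set.InjOn (fun (s : Finset (Fin N)) (k : Fin N) => if k ∈ s then (1 : ℝ) else 0)
      (univ.powersetCard K : Finset (Finset (Fin N))) := fun s _ t _ hst => by
    ext k
    have := congrFun hst k
    by_cases hks : k ∈ s <;> by_cases hkt : k ∈ t <;> simp_all
  rw [infoMatrix, BK, sum_image hinj, Matrix.sum_apply, card_filter, Nat.cast_sum, mul_sum]
  refine sum_congr rfl fun s hs => ?_
  have hnorm : ∑ k, (if k ∈ s then (1 : ℝ) else 0) ^ 2 = K := by
    simp [(mem_powersetCard.mp hs).2]
  rw [Matrix.smul_apply, vecMulVec_apply, hnorm, smul_eq_mul]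
  by_cases hi : i ∈ s <;> by_cases hj : j ∈ s <;> simp [hi, hj, insert_subset_iff]

theorem infoMatrix_uniform_BK_apply {N K : ℕ} (hKN : K ≤ N) (i j : Fin N) :
    infoMatrix (BK N K) (fun _ => (N.choose K : ℝ)⁻¹) i j
      = K.choose #{i, j} / (K * N.choose #{i, j}) := by
  have hNK : (N.choose K : ℝ) ≠ 0 := by exact_mod_cast (Nat.choose_pos hKN).ne'
  have hNpair : (N.choose #{i, j} : ℝ) ≠ 0 := by
    exact_mod_cast (Nat.choose_pos ((card_le_univ _).trans_eq (Fintype.card_fin N))).ne'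
  have hcount : (#{s ∈ univ.powersetCard K | {i, j} ⊆ s} : ℝ)
      = N.choose K * K.choose #{i, j} / N.choose #{i, j} := by
    have h := card_filter_powersetCard_subset_mul_choose {i, j} univ K (subset_univ _)
    rw [card_univ, Fintype.card_fin] at h
    rw [eq_div_iff hNpair]
    exact_mod_cast h
  rw [infoMatrix_BK_apply, hcount]
  field_simp

theorem infoMatrix_uniform_BK_eq {N K : ℕ} (hN : 2 ≤ N) (hK : 1 ≤ K) (hKN : K ≤ N) :
    infoMatrix (BK N K) (fun _ => (N.choose K : ℝ)⁻¹)
      = (((N : ℝ) - K) / (N * (N - 1))) • 1 + (((K : ℝ) - 1) / (N * (N - 1))) • of 1 := by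
  have hN0 : (N : ℝ) ≠ 0 := by positivity
  have hN1 : (N : ℝ) - 1 ≠ 0 := sub_ne_zero.mpr (by norm_cast; omega)
  have hK0 : (K : ℝ) ≠ 0 := by positivity
  ext i j
  rw [infoMatrix_uniform_BK_apply hKN]
  rcases eq_or_ne i j with rfl | hij
  · simp only [insert_eq_self.mpr (mem_singleton_self i), card_singleton, Nat.choose_one_right,
      Matrix.add_apply, Matrix.smul_apply, one_apply_eq, of_apply, Pi.one_apply, smul_eq_mul]
    field_simp
    ring
  · simp only [card_pair hij, Nat.cast_choose_two, Matrix.add_apply, Matrix.smul_apply,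
      one_apply_ne hij, of_apply, Pi.one_apply, smul_eq_mul]
    field_simp
    ring

/-- for the uniform distribution `p` on `B_K` (with `1 ≤ K < N`),
the information matrix `M(p)` is invertible and
`trace(M(p)⁻¹) = N/K + N(N-1)²/(N-K)`. -/
theorem trace_inv_infoMatrix_uniform_BK (N K : ℕ) (hN : 2 ≤ N) (hK1 : 1 ≤ K) (hKN : K < N) :
    IsUnit (infoMatrix (BK N K) (fun _ => (N.choose K : ℝ)⁻¹)) ∧
    (infoMatrix (BK N K) (fun _ => (N.choose K : ℝ)⁻¹))⁻¹.trace
      = (N : ℝ) / K + N * ((N : ℝ) - 1) ^ 2 / ((N : ℝ) - K) := by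
  have hN' : (2 : ℝ) ≤ N := by exact_mod_cast hN
  have hK' : (1 : ℝ) ≤ K := by exact_mod_cast hK1
  have hKN' : (K : ℝ) < N := by exact_mod_cast hKN
  have hN0 : (N : ℝ) ≠ 0 := by linarith
  have hN1 : (N : ℝ) - 1 ≠ 0 := by linarith
  have hNK : (N : ℝ) - K ≠ 0 := by linarith
  have ha : ((N : ℝ) - K) / (N * (N - 1)) ≠ 0 := div_ne_zero hNK (mul_ne_zero hN0 hN1)
  have hab : ((N : ℝ) - K) / (N * (N - 1)) + Fintype.card (Fin N) * (((K : ℝ) - 1) / (N * (N - 1)))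
      = K / N := by
    rw [Fintype.card_fin]
    field_simp
    ring
  rw [infoMatrix_uniform_BK_eq hN hK1 hKN.le]
  refine ⟨isUnit_smul_one_add_smul_of_one ha (by rw [hab]; positivity), ?_⟩
  rw [trace_inv_smul_one_add_smul_of_one ha (by rw [hab]; positivity), hab, Fintype.card_fin]
  field_simp
  ring
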